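/- arXiv:1605.06529 — 9 statements merged into one kernel-verified Lean document; each statement's English description precedes it below -/
import Mathlib

section
/- If a family of cubic matrices M^{[s,t]} = (c_{ijk}^{[s,t]}) satisfies the Kolmogorov-Chapman equation with respect to the type (D) multiplication c_{ijr}^{[s,t]} = Σ_{k,n} c_{ijk}^{[s,τ]} c_{knr}^{[τ,t]} for all 0 ≤ s < τ < t, then the square matrices M̄^{[s,t]} with entries c̄_{ik}^{[s,t]} = Σ_{j=1}^m c_{ijk}^{[s,t]} satisfy the ordinary matrix Kolmogorov-Chapman equation M̄^{[s,t]} = M̄^{[s,τ]} · M̄^{[τ,t]}. -/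
open Matrix

theorem typeD_reduces_to_square (m : ℕ)
    (c : ℝ → ℝ → (Fin m → Fin m → Fin m → ℝ))
    (hKC : ∀ s τ t : ℝ, 0 ≤ s → s < τ → τ < t →
        ∀ i j r, c s t i j r = ∑ k, ∑ n, c s τ i j k * c τ t k n r)
    (s τ t : ℝ) (hs : 0 ≤ s) (hsτ : s < τ) (hτt : τ < t) :
    (Matrix.of fun i k => ∑ j, c s t i j k) =
      (Matrix.of fun i k => ∑ j, c s τ i j k) *
        (Matrix.of fun i k => ∑ j, c τ t i j k) := by
  ext i r
  simp only [Matrix.mul_apply, Matrix.of_apply]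
  calc ∑ j, c s t i j r
      = ∑ j, ∑ k, ∑ n, c s τ i j k * c τ t k n r := by
        exact Finset.sum_congr rfl fun j _ => hKC s τ t hs hsτ hτt i j r
    _ = ∑ k, (∑ j, c s τ i j k) * ∑ j, c τ t k j r := by
        rw [Finset.sum_comm]
        exact Finset.sum_congr rfl fun k _ => by
          rw [Finset.sum_mul]
          exact Finset.sum_congr rfl fun j _ => by rw [Finset.mul_sum]
end

section
/- Let Ψ, κ₁₁, κ₂₁ : ℝ → ℝ with Ψ nowhere zero. Define the 2×2×2 cubic matrix M^{[s,t]} by: c_{111} = κ₁₁(s)Ψ(t), c_{112} = -κ₁₁(s)Ψ(t), c_{121} = (1/(2Ψ(s)) - κ₁₁(s))Ψ(t), c_{122} = (κ₁₁(s) - 1/(2Ψ(s)))Ψ(t), c_{211} = κ₂₁(s)Ψ(t), c_{212} = -κ₂₁(s)Ψ(t), c_{221} = (-1/(2Ψ(s)) - κ₂₁(s))Ψ(t), c_{222} = (κ₂₁(s) + 1/(2Ψ(s)))Ψ(t). Then this family satisfies the Kolmogorov-Chapman equation with respect to the type (D) multiplication of cubic matrices: c_{ijr}^{[s,t]} = Σ_{k,n}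 c_{ijk}^{[s,τ]} c_{knr}^{[τ,t]} for all 0 ≤ s < τ < t. -/
theorem typeD_flow_example8
    (Ψ κ₁₁ κ₂₁ : ℝ → ℝ) (hΨ : ∀ t : ℝ, Ψ t ≠ 0)
    (c : ℝ → ℝ → (Fin 2 → Fin 2 → Fin 2 → ℝ))
    (hc : ∀ s t : ℝ, c s t =
      ![![![κ₁₁ s * Ψ t, -κ₁₁ s * Ψ t],
          ![(1 / (2 * Ψ s) - κ₁₁ s) * Ψ t, (κ₁₁ s - 1 / (2 * Ψ s)) * Ψ t]],
        ![![κ₂₁ s * Ψ t, -κ₂₁ s * Ψ t],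
          ![(-(1 / (2 * Ψ s)) - κ₂₁ s) * Ψ t, (κ₂₁ s + 1 / (2 * Ψ s)) * Ψ t]]])
    (s τ t : ℝ) (hs : 0 ≤ s) (hsτ : s < τ) (hτt : τ < t) :
    ∀ i j r, c s t i j r = ∑ k, ∑ n, c s τ i j k * c τ t k n r := by
  intro i j r
  simp only [hc, Fin.sum_univ_two]
  fin_cases i <;> fin_cases j <;> fin_cases r <;>
    simp [Matrix.cons_val_zero, Matrix.cons_val_one] <;>
    field_simp [hΨ τ] <;> ring
end

section
/- Let a, b, c, d ∈ ℝ and for t̂ = t - s define the 2×2×2 cubic matrix M^{[t̂]} by: c_{111} = a·cos t̂ - b·sin t̂, c_{112} = b·cos t̂ + a·sin t̂, c_{121} = (1-a)·cos t̂ + b·sin t̂, c_{122} = -b·cos t̂ + (1-a)·sin t̂, c_{211} = c·cos t̂ - d·sin t̂, c_{212} = d·cos t̂ + c·sin t̂, c_{221} = -c·cos t̂ - (1-d)·sin t̂, c_{222} = (1-d)·cos t̂ - c·sin t̂. Then M^{[s,t]} := M^{[t-s]} satisfies the Kolmogorov-Chapman equation with respect to the type (D) multiplication for all 0 ≤ s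 < τ < t. -/
open Real

set_option maxHeartbeats 1000000 in

theorem typeD_flow_example9
    (a b c d : ℝ)
    (M : ℝ → (Fin 2 → Fin 2 → Fin 2 → ℝ))
    (hM : ∀ u : ℝ, M u =
      ![![![a * cos u - b * sin u, b * cos u + a * sin u],
          ![(1 - a) * cos u + b * sin u, -b * cos u + (1 - a) * sin u]],
        ![![c * cos u - d * sin u, d * cos u + c * sin u],
          ![-c * cos u - (1 - d) * sin u, (1 - d) * cos u - c * sin u]]])
    (s τ t : ℝ) (hs : 0 ≤ s) (hsτ : s < τ) (hτt : τ < t) :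
    ∀ i j r, M (t - s) i j r = ∑ k, ∑ n, M (τ - s) i j k * M (t - τ) k n r := by
  have h : t - s = (τ - s) + (t - τ) := by ring
  intro i j r
  fin_cases i <;> fin_cases j <;> fin_cases r <;>
    simp only [hM, h, Fin.isValue, Fin.mk_zero, Fin.mk_one, Fin.sum_univ_two, Matrix.cons_val_zero, Matrix.cons_val_one,
      Matrix.head_cons, cos_add, sin_add] <;> ring_nf
end

section
/- Let A^{[t]} (t ≥ 0) be a family of invertible m×m real matrices with inverses B^{[t]} = (b_{ij}^{[t]}), and let β_{ijk}^{(s)} be real functions such that Σ_{j=1}^m β_{ijk}^{(s)} = a_{ik}^{[s]} for all i,k,s. Then the cubic matrices M^{[s,t]} with entries c_{ijr}^{[s,t]} = Σ_{k=1}^m β_{ijk}^{(s)} b_{kr}^{[t]} satisfy the Kolmogorov-Chapman equation c_{ijr}^{[s,t]} = Σ_{k,n} c_{ijk}^{[s,τ]} c_{knr}^{[τ,t]} (type (D) multiplication) for all 0 ≤ s < τ < t. -/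
open Matrix

theorem typeD_flow_from_invertible_family (m : ℕ)
    (A B : ℝ → Matrix (Fin m) (Fin m) ℝ)
    (hAB : ∀ t : ℝ, 0 ≤ t → A t * B t = 1 ∧ B t * A t = 1)
    (β : ℝ → (Fin m → Fin m → Fin m → ℝ))
    (hβ : ∀ (s : ℝ) (i k : Fin m), ∑ j, β s i j k = A s i k)
    (c : ℝ → ℝ → (Fin m → Fin m → Fin m → ℝ))
    (hc : ∀ (s t : ℝ) (i j r : Fin m), c s t i j r = ∑ k, β s i j k * B t k r)
    (s τ t : ℝ) (hs : 0 ≤ s) (hsτ : s < τ) (hτt : τ < t) :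
    ∀ i j r, c s t i j r = ∑ k, ∑ n, c s τ i j k * c τ t k n r := by
  intro i j r
  have hτ : (0:ℝ) ≤ τ := le_of_lt (lt_of_le_of_lt hs hsτ)
  have key : B τ * (A τ * B t) = B t := by
    rw [← Matrix.mul_assoc, (hAB τ hτ).2, Matrix.one_mul]
  calc c s t i j r = ∑ p, β s i j p * B t p r := hc s t i j r
    _ = ∑ p, β s i j p * ∑ k, B τ p k * (A τ * B t) k r := by
        apply Finset.sum_congr rfl; intro p _
        rw [show ∑ k, B τ p k * (A τ * B t) k r = (B τ * (A τ * B t)) p r from rfl, key]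
    _ = ∑ p, ∑ k, β s i j p * B τ p k * ((A τ * B t) k r) := by
        simp [Finset.mul_sum, mul_assoc]
    _ = ∑ k, ∑ p, β s i j p * B τ p k * ((A τ * B t) k r) := Finset.sum_comm
    _ = ∑ k, c s τ i j k * ((A τ * B t) k r) := by
        simp [hc, Finset.sum_mul]
    _ = ∑ k, ∑ n, c s τ i j k * c τ t k n r := by
        apply Finset.sum_congr rfl; intro k _
        have h2 : (A τ * B t) k r = ∑ n, c τ t k n r := by
          calc (A τ * B t) k r = ∑ q, A τ k q * B t q r := rfl
            _ = ∑ q, (∑ n, β τ k n q) * B t q r := by simp [hβ]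
            _ = ∑ q, ∑ n, β τ k n q * B t q r := by simp [Finset.sum_mul]
            _ = ∑ n, ∑ q, β τ k n q * B t q r := Finset.sum_comm
            _ = ∑ n, c τ t k n r := by simp [hc]
        rw [h2, Finset.mul_sum]
end

section
/- Let A^{[t]} (t ≥ 0) be a family of invertible m×m real matrices with inverses B^{[t]} = (b_{ij}^{[t]}), and let γ_{ijk}^{(t)} be real functions such that Σ_{j=1}^m γ_{ijk}^{(t)} = b_{ik}^{[t]} for all i,k,t. Then the cubic matrices M^{[s,t]} with entries c_{ijr}^{[s,t]} = Σ_{k=1}^m a_{ik}^{[s]} γ_{kjr}^{(t)} satisfy the Kolmogorov-Chapman equation with respect to the type (E) multiplication: c_{inr}^{[s,t]} = Σ_{j,k} c_{ijk}^{[s,τ]} c_{knr}^{[τ,t]} for all 0 ≤ s < τ < t. -/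
open Matrix

theorem typeE_flow_from_invertible_family (m : ℕ)
    (A B : ℝ → Matrix (Fin m) (Fin m) ℝ)
    (hAB : ∀ t : ℝ, 0 ≤ t → A t * B t = 1 ∧ B t * A t = 1)
    (γ : ℝ → (Fin m → Fin m → Fin m → ℝ))
    (hγ : ∀ (t : ℝ) (i k : Fin m), ∑ j, γ t i j k = B t i k)
    (c : ℝ → ℝ → (Fin m → Fin m → Fin m → ℝ))
    (hc : ∀ (s t : ℝ) (i j r : Fin m), c s t i j r = ∑ k, A s i k * γ t k j r)
    (s τ t : ℝ) (hs : 0 ≤ s) (hsτ : s < τ) (hτt : τ < t) :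
    ∀ i n r, c s t i n r = ∑ j, ∑ k, c s τ i j k * c τ t k n r := by
  intro i n r
  have hτ : 0 ≤ τ := le_of_lt (lt_of_le_of_lt hs hsτ)
  have hBA : B τ * A τ = 1 := (hAB τ hτ).2
  have step1 : ∀ k, ∑ j, c s τ i j k = (A s * B τ) i k := by
    intro k
    simp only [hc]
    rw [Finset.sum_comm]
    simp [Matrix.mul_apply, ← Finset.mul_sum, hγ]
  calc c s t i n r
      = ∑ q, (A s * B τ * A τ) i q * γ t q n r := by
        rw [hc, Matrix.mul_assoc, hBA, Matrix.mul_one]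
    _ = ∑ q, (∑ k, (A s * B τ) i k * A τ k q) * γ t q n r := by
        simp [Matrix.mul_apply]
    _ = ∑ k, (A s * B τ) i k * ∑ q, A τ k q * γ t q n r := by
        simp only [Finset.sum_mul, Finset.mul_sum, mul_assoc]
        rw [Finset.sum_comm]
    _ = ∑ j, ∑ k, c s τ i j k * c τ t k n r := by
        rw [Finset.sum_comm]
        refine Finset.sum_congr rfl fun k _ => ?_
        rw [← step1 k, Finset.sum_mul]
        exact Finset.sum_congr rfl fun j _ => by rw [hc s τ, hc τ t]
end

section
/- Let m ≥ 2 and let {c_{ijk}^{[s,t]}} be a family of cubic matrices satisfying the Kolmogorov-Chapman equation with respect to type (D) multiplication: c_{ijr}^{[s,t]} = Σ_{k,n} c_{ijk}^{[s,τ]} c_{knr}^{[τ,t]} for all 0 ≤ s < τ < t. Then it cannot hold that Σ_{r=1}^m c_{ijr}^{[s,t]} = 1 for all i,j and all pairs s < t. In particular, no algebra in a flow of m-dimensional algebras of type (D), m ≥ 2, satisfies the baric normalization condition at all times. -/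
theorem typeD_flow_never_baric (m : ℕ) (hm : 2 ≤ m)
    (c : ℝ → ℝ → (Fin m → Fin m → Fin m → ℝ))
    (hKC : ∀ s τ t : ℝ, 0 ≤ s → s < τ → τ < t →
        ∀ i j r, c s t i j r = ∑ k, ∑ n, c s τ i j k * c τ t k n r) :
    ¬ (∀ s t : ℝ, 0 ≤ s → s < t → ∀ i j, ∑ r, c s t i j r = 1) := by
  intro h
  have hi : (0 : ℕ) < m := by omega
  set i : Fin m := ⟨0, hi⟩
  have key : (1 : ℝ) = (m : ℝ) := by
    calc (1 : ℝ) = ∑ r, c 0 2 i i r := (h 0 2 le_rfl (by norm_num) i i).symm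
    _ = ∑ r, ∑ k, ∑ n, c 0 1 i i k * c 1 2 k n r := by
        refine Finset.sum_congr rfl fun r _ => ?_
        exact hKC 0 1 2 le_rfl (by norm_num) (by norm_num) i i r
    _ = ∑ k, ∑ n, c 0 1 i i k * ∑ r, c 1 2 k n r := by
        rw [Finset.sum_comm]
        refine Finset.sum_congr rfl fun k _ => ?_
        rw [Finset.sum_comm]
        simp [Finset.mul_sum]
    _ = ∑ k, ∑ n : Fin m, c 0 1 i i k := by
        refine Finset.sum_congr rfl fun k _ => Finset.sum_congr rfl fun n _ => ?_
        rw [h 1 2 (by norm_num) (by norm_num), mul_one]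
    _ = (m : ℝ) * ∑ k, c 0 1 i i k := by
        simp [Finset.mul_sum]
    _ = (m : ℝ) := by rw [h 0 1 le_rfl (by norm_num), mul_one]
  have : (m : ℝ) ≥ 2 := by exact_mod_cast hm
  linarith
end

section
/- In the limit as t-s → ∞ of the flow of Example 2, for ε ∈ (0,1/2] the structure constants c_{ij1}^{[s,t]} → 0 and c_{ij2}^{[s,t]} → 1 for all i,j ∈ {1,2}; that is, the limit algebra satisfies e_i e_j = e₂ for all i,j. -/
open Filter Topology

lemma example2_aux (a c k : ℝ) (ha0 : 0 ≤ a) (ha1 : a < 1) :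
    Tendsto (fun u : ℝ => a ^ u / 2 ^ (u - 1) * ((2 ^ (u - 1) - 1) * c + k))
      atTop (𝓝 0) := by
  have heq : ∀ u : ℝ, a ^ u / 2 ^ (u - 1) * ((2 ^ (u - 1) - 1) * c + k)
      = a ^ u * c + (a / 2) ^ u * (2 * (k - c)) := by
    intro u
    have h2 : (2:ℝ) ^ (u - 1) = 2 ^ u / 2 := by
      rw [Real.rpow_sub two_pos, Real.rpow_one]
    rw [Real.div_rpow ha0 (le_of_lt two_pos), h2]
    have hne : (2:ℝ) ^ u ≠ 0 := (Real.rpow_pos_of_pos two_pos u).ne'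
    field_simp
    ring
  simp only [heq]
  have t1 : Tendsto (fun u : ℝ => a ^ u) atTop (𝓝 0) :=
    tendsto_rpow_atTop_of_base_lt_one a (by linarith) ha1
  have t2 : Tendsto (fun u : ℝ => (a / 2) ^ u) atTop (𝓝 0) :=
    tendsto_rpow_atTop_of_base_lt_one _ (by linarith) (by linarith)
  have := (t1.mul_const c).add (t2.mul_const (2 * (k - c)))
  simpa using this

theorem example2_limit_algebra
    (x ε : ℝ) (hx : x ∈ Set.Icc (0:ℝ) 1) (hε : ε ∈ Set.Ioc (0:ℝ) (1/2))
    (P : ℝ → ℝ → (Fin 2 → Fin 2 → Fin 2 → ℝ))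
    (hP1 : ∀ s t : ℝ, (fun i j => P s t i j 0) =
      ![![(1 - 2*ε) ^ (t - s) / 2 ^ (t - s - 1) *
            ((2 ^ (t - s - 1) - 1) * (1 - 2*ε) ^ s * x + 1),
          (1 - 2*ε) ^ (t - s) / 2 ^ (t - s - 1) *
            ((2 ^ (t - s - 1) - 1) * (1 - 2*ε) ^ s * x + 1/2)],
        ![(1 - 2*ε) ^ (t - s) / 2 ^ (t - s - 1) *
            ((2 ^ (t - s - 1) - 1) * (1 - 2*ε) ^ s * x + 1/2),
          (1 - 2*ε) ^ (t - s) / 2 ^ (t - s - 1) * ((2 ^ (t - s - 1) - 1) * x)]])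
    (hP2 : ∀ (s t : ℝ) (i j : Fin 2), P s t i j 1 = 1 - P s t i j 0)
    (s : ℝ) (hs : 0 ≤ s) :
    ∀ i j : Fin 2,
      Tendsto (fun u : ℝ => P s (s + u) i j 0) atTop (𝓝 0) ∧
      Tendsto (fun u : ℝ => P s (s + u) i j 1) atTop (𝓝 1) := by
  obtain ⟨hε0, hε2⟩ := hε
  have ha0 : (0:ℝ) ≤ 1 - 2*ε := by linarith
  have ha1 : (1 - 2*ε : ℝ) < 1 := by linarith
  intro i j
  have key : Tendsto (fun u : ℝ => P s (s + u) i j 0) atTop (𝓝 0) := by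
    have hval : ∀ u : ℝ, P s (s + u) i j 0 = _ :=
      fun u => congrFun (congrFun (hP1 s (s + u)) i) j
    simp only [hval, add_sub_cancel_left]
    fin_cases i <;> fin_cases j <;>
      simp only [Fin.zero_eta, Fin.mk_one, Matrix.cons_val_zero, Matrix.cons_val_one, Matrix.head_cons, Fin.isValue]
    · simpa only [mul_assoc] using
        example2_aux (1 - 2*ε) ((1 - 2*ε) ^ s * x) 1 ha0 ha1
    · simpa only [mul_assoc] using
        example2_aux (1 - 2*ε) ((1 - 2*ε) ^ s * x) (1/2) ha0 ha1
    · simpa only [mul_assoc] using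
        example2_aux (1 - 2*ε) ((1 - 2*ε) ^ s * x) (1/2) ha0 ha1
    · simpa only [add_zero] using example2_aux (1 - 2*ε) x 0 ha0 ha1
  refine ⟨key, ?_⟩
  have h1 : Tendsto (fun u : ℝ => 1 - P s (s + u) i j 0) atTop (𝓝 1) := by
    simpa using key.const_sub 1
  simpa only [hP2] using h1
end

section
/- Consider the cubic matrix family c_{i1r}^{[s,t]} = R(t-s)_{ir} and c_{i2r}^{[s,t]} = R(t-s)_{ri} where R(u) = [[cos u, sin u],[-sin u, cos u]]. The corresponding two-dimensional algebra A^{[s,t]} with e_i e_j = Σ_r c_{ijr}^{[s,t]} e_r is commutative if and only if cos(t-s) = -sin(t-s), i.e. iff t - s = 3π/4 + πn for some nonnegative integer n (for t ≥ s). -/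
open Real Matrix

theorem commutativity_rotation_flow
    (R : ℝ → Matrix (Fin 2) (Fin 2) ℝ)
    (hR : ∀ u : ℝ, R u = !![cos u, sin u; -sin u, cos u])
    (c : ℝ → ℝ → (Fin 2 → Fin 2 → Fin 2 → ℝ))
    (hc : ∀ (s t : ℝ) (i r : Fin 2),
      c s t i 0 r = R (t - s) i r ∧ c s t i 1 r = R (t - s) r i)
    (s t : ℝ) (hst : s ≤ t) :
    ((∀ i j r, c s t i j r = c s t j i r) ↔ cos (t - s) = -sin (t - s)) ∧
    (cos (t - s) = -sin (t - s) ↔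
      ∃ n : ℕ, t - s = 3 * π / 4 + π * n) := by
  have hc0 : ∀ i r : Fin 2, c s t i 0 r = R (t - s) i r := fun i r => (hc s t i r).1
  have hc1 : ∀ i r : Fin 2, c s t i 1 r = R (t - s) r i := fun i r => (hc s t i r).2
  constructor
  · constructor
    · intro h
      have h1 := h 1 0 0
      rw [hc0 1 0, hc1 0 0, hR] at h1
      simp [Matrix.cons_val_zero, Matrix.cons_val_one] at h1
      linarith
    · intro h i j r
      fin_cases i <;> fin_cases j <;> fin_cases r <;>
        simp [hc0, hc1, hR, h] <;> linarith
  · have hπ := Real.pi_pos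
    have h34 : Real.cos (3*π/4) = - Real.sin (3*π/4) := by
      have e : (3:ℝ)*π/4 = π - π/4 := by ring
      rw [e, Real.cos_pi_sub, Real.sin_pi_sub, Real.cos_pi_div_four,
        Real.sin_pi_div_four]
    constructor
    · intro h
      have hs0 : Real.sin (t - s + π/4) = 0 := by
        rw [Real.sin_add, Real.cos_pi_div_four, Real.sin_pi_div_four]
        rw [h]; ring
      rw [Real.sin_eq_zero_iff] at hs0
      obtain ⟨n, hn⟩ := hs0
      have hn1 : 1 ≤ n := by
        by_contra hcon
        push_neg at hcon
        have hn0 : (n:ℝ) ≤ 0 := by exact_mod_cast Int.lt_add_one_iff.mp hcon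
        have hts : (0:ℝ) ≤ t - s := by linarith
        nlinarith
      refine ⟨(n-1).toNat, ?_⟩
      have ht : (((n-1).toNat : ℕ) : ℝ) = (n:ℝ) - 1 := by
        have h2 : ((n-1).toNat : ℤ) = n - 1 := Int.toNat_of_nonneg (by omega)
        exact_mod_cast congrArg (fun z : ℤ => (z:ℝ)) h2
      rw [ht]
      nlinarith [hn]
    · rintro ⟨n, hn⟩
      have e : t - s = π*(n:ℝ) + 3*π/4 := by rw [hn]; ring
      have hsn : Real.sin ((n:ℝ)*π) = 0 := Real.sin_nat_mul_pi n
      rw [e, Real.cos_add, Real.sin_add, mul_comm π ((n:ℝ))] at *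
      rw [hsn, h34]; ring
end

section
/- With the cubic matrix M^{[s,t]} of Theorem tA (c_{ijr}^{[s,t]} = Σ_k β_{ijk}^{(s)} b_{kr}^{[t]}, (b^{[t]}) invertible), the algebra A^{[s,t]} is associative if and only if Σ_{p,r} (β_{ijp}^{(s)} β_{rkq}^{(s)} - β_{irq}^{(s)} β_{jkp}^{(s)}) b_{pr}^{[t]} = 0 for all i,j,k,q. -/
open Matrix

private lemma sum3_rev {n : ℕ} (f : Fin n → Fin n → Fin n → ℝ) :
    ∑ a, ∑ b, ∑ c, f a b c = ∑ c, ∑ b, ∑ a, f a b c :=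
  calc ∑ a, ∑ b, ∑ c, f a b c = ∑ a, ∑ c, ∑ b, f a b c :=
        Finset.sum_congr rfl fun _ _ => Finset.sum_comm
    _ = ∑ c, ∑ a, ∑ b, f a b c := Finset.sum_comm
    _ = ∑ c, ∑ b, ∑ a, f a b c := Finset.sum_congr rfl fun _ _ => Finset.sum_comm

private lemma sum3_rot {n : ℕ} (f : Fin n → Fin n → Fin n → ℝ) :
    ∑ a, ∑ b, ∑ c, f a b c = ∑ b, ∑ c, ∑ a, f a b c := by
  rw [Finset.sum_comm]
  refine Finset.sum_congr rfl fun b _ => Finset.sum_comm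

theorem thmA_flow_associativity (m : ℕ)
    (A B : ℝ → Matrix (Fin m) (Fin m) ℝ)
    (hAB : ∀ t : ℝ, 0 ≤ t → A t * B t = 1 ∧ B t * A t = 1)
    (β : ℝ → (Fin m → Fin m → Fin m → ℝ))
    (hβ : ∀ (s : ℝ) (i k : Fin m), ∑ j, β s i j k = A s i k)
    (c : ℝ → ℝ → (Fin m → Fin m → Fin m → ℝ))
    (hc : ∀ (s t : ℝ) (i j r : Fin m), c s t i j r = ∑ k, β s i j k * B t k r)
    (s t : ℝ) (hs : 0 ≤ s) (hst : s < t) :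
    (∀ i j k l, ∑ r, c s t i j r * c s t r k l = ∑ r, c s t i r l * c s t j k r) ↔
      (∀ i j k q, ∑ p, ∑ r,
        (β s i j p * β s r k q - β s i r q * β s j k p) * B t p r = 0) := by
  have ht : (0:ℝ) ≤ t := le_of_lt (lt_of_le_of_lt hs hst)
  obtain ⟨hABt, hBAt⟩ := hAB t ht
  have key : ∀ i j k l : Fin m,
      (∑ r, c s t i j r * c s t r k l) - (∑ r, c s t i r l * c s t j k r)
        = ∑ q, (∑ p, ∑ r, (β s i j p * β s r k q - β s i r q * β s j k p) * B t p r)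
            * B t q l := by
    intro i j k l
    have h1 : (∑ r, c s t i j r * c s t r k l)
        = ∑ q, ∑ p, ∑ r, (β s i j p * β s r k q) * B t p r * B t q l := by
      simp only [hc, Finset.sum_mul, Finset.mul_sum]
      rw [sum3_rot (fun r q p => β s i j p * B t p r * (β s r k q * B t q l))]
      refine Finset.sum_congr rfl fun q _ => Finset.sum_congr rfl fun p _ =>
        Finset.sum_congr rfl fun r _ => by ring
    have h2 : (∑ r, c s t i r l * c s t j k r)
        = ∑ q, ∑ p, ∑ r, (β s i r q * β s j k p) * B t p r * B t q l := by
      simp only [hc, Finset.sum_mul, Finset.mul_sum]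
      rw [sum3_rev (fun r p q => β s i r q * B t q l * (β s j k p * B t p r))]
      refine Finset.sum_congr rfl fun q _ => Finset.sum_congr rfl fun p _ =>
        Finset.sum_congr rfl fun r _ => by ring
    rw [h1, h2, ← Finset.sum_sub_distrib]
    refine Finset.sum_congr rfl fun q _ => ?_
    rw [Finset.sum_mul, ← Finset.sum_sub_distrib]
    refine Finset.sum_congr rfl fun p _ => ?_
    rw [Finset.sum_mul, ← Finset.sum_sub_distrib]
    refine Finset.sum_congr rfl fun r _ => by ring
  have cancel : ∀ f : Fin m → ℝ, (∀ l, ∑ q, f q * B t q l = 0) → ∀ q, f q = 0 := by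
    intro f hf q
    have h0 : f q = ∑ q', f q' * (B t * A t) q' q := by
      simp [hBAt, Matrix.one_apply, Finset.sum_ite_eq', Finset.mul_sum]
    rw [h0]
    simp only [Matrix.mul_apply, Finset.mul_sum]
    rw [Finset.sum_comm]
    simp only [← mul_assoc, ← Finset.sum_mul]
    simp [hf]
  constructor
  · intro h i j k q
    refine cancel (fun q' => ∑ p, ∑ r,
      (β s i j p * β s r k q' - β s i r q' * β s j k p) * B t p r) (fun l => ?_) q
    rw [← key i j k l, h i j k l, sub_self]
  · intro h i j k l
    have hk := key i j k l
    simp only [h, zero_mul, Finset.sum_const_zero] at hk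
    linarith
end
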